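/- Let R be a 2-torsion free commutative ring with identity, n ≥ 2 and k ≥ 1 integers. Then Z(Tₙ(R))_k = R·1: a matrix W ∈ Tₙ(R) satisfies [W, X]_k = 0 for all X ∈ Tₙ(R) if and only if W is an R-scalar multiple of the identity matrix. -/

import Mathlib

/-- The iterated commutator: `iterComm 0 x y = x`, `iterComm (i+1) x y = [iterComm i x y, y]`. -/
def iterComm {G : Type*} [Ring G] : ℕ → G → G → G
  | 0, x, _ => x
  | i + 1, x, y => iterComm i x y * y - y * iterComm i x y

/-- The algebra `Tₙ(R)` of `n × n` upper triangular matrices over `R`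
(entries below the diagonal vanish), as a subalgebra of `Mₙ(R)`. -/
def upperTriAlg (R : Type*) [CommRing R] (n : ℕ) :
    Subalgebra R (Matrix (Fin n) (Fin n) R) where
  carrier := {X | X.BlockTriangular (id : Fin n → Fin n)}
  mul_mem' := fun {a b} (ha : Matrix.BlockTriangular a id) (hb : Matrix.BlockTriangular b id) =>
    Matrix.BlockTriangular.mul ha hb
  add_mem' := fun {a b} (ha : Matrix.BlockTriangular a id) (hb : Matrix.BlockTriangular b id) =>
    Matrix.BlockTriangular.add ha hb
  algebraMap_mem' := fun r => by
    show Matrix.BlockTriangular _ id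
    rw [Matrix.algebraMap_eq_diagonal]
    exact Matrix.blockTriangular_diagonal _

/-!
The iterated commutator with an idempotent `e` satisfies `[x, e]₃ = [x, e]₁`: in the Peirce
decomposition with respect to `e`, `[·, e]` kills the two diagonal corners and acts as `±1` on the
two off-diagonal ones. Hence `[W, e]_k = 0` with `k ≥ 1` forces `W` to commute with `e`. The
matrix units `E_ii` and `E_ii + E_ij` (`i < j`) are idempotents of `Tₙ(R)` that span the matrix
units `E_ij`, `i ≤ j`, and a matrix commuting with all of these is scalar.
-/

section IterComm

variable {G : Type*} [Ring G]

theorem iterComm_succ (m : ℕ) (x y : G) :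
    iterComm (m + 1) x y = iterComm m x y * y - y * iterComm m x y := rfl

theorem iterComm_add (i j : ℕ) (x y : G) :
    iterComm (i + j) x y = iterComm j (iterComm i x y) y := by
  induction j with
  | zero => rfl
  | succ j ih => rw [← add_assoc, iterComm_succ, iterComm_succ, ih]

theorem map_iterComm {H F : Type*} [Ring H] [FunLike F G H] [RingHomClass F G H] (f : F)
    (m : ℕ) (x y : G) : f (iterComm m x y) = iterComm m (f x) (f y) := by
  induction m with
  | zero => rfl
  | succ m ih => rw [iterComm_succ, iterComm_succ, map_sub, map_mul, map_mul, ih]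

theorem iterComm_eq_zero_of_commute {x y : G} (h : Commute x y) {m : ℕ} (hm : m ≠ 0) :
    iterComm m x y = 0 := by
  obtain ⟨m, rfl⟩ := Nat.exists_eq_succ_of_ne_zero hm
  induction m with
  | zero => exact sub_eq_zero.mpr h.eq
  | succ m ih => rw [iterComm_succ, ih (Nat.succ_ne_zero m), zero_mul, mul_zero, sub_zero]

theorem iterComm_three_of_isIdempotentElem {e : G} (he : IsIdempotentElem e) (x : G) :
    iterComm 3 x e = iterComm 1 x e := by
  have he' : ∀ z, e * (e * z) = e * z := fun z => by rw [← mul_assoc, he.eq]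
  simp only [iterComm, mul_sub, sub_mul, mul_assoc, he.eq, he']
  abel

theorem commute_of_iterComm_eq_zero {e : G} (he : IsIdempotentElem e) {x : G} {k : ℕ}
    (hk : k ≠ 0) (h : iterComm k x e = 0) : Commute x e := by
  induction k using Nat.strong_induction_on with
  | _ k ih =>
    match k, hk, h with
    | 1, _, h => exact sub_eq_zero.mp h
    | 2, _, h =>
      refine ih 1 (by norm_num) one_ne_zero ?_
      rw [← iterComm_three_of_isIdempotentElem he, iterComm_succ, h, zero_mul, mul_zero, sub_zero]
    | m + 3, _, h =>
      refine ih (m + 1) (by omega) (Nat.succ_ne_zero m) ?_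
      rwa [iterComm_add m 3, iterComm_three_of_isIdempotentElem he, ← iterComm_add] at h

end IterComm

namespace Matrix

variable {n α : Type*} [Fintype n] [DecidableEq n] [Semiring α]

theorem isIdempotentElem_single_add_single {i j : n} (hij : i ≠ j) :
    IsIdempotentElem (single i i (1 : α) + single i j 1) := by
  simp only [IsIdempotentElem, add_mul, mul_add, single_mul_single_same,
    single_mul_single_of_ne _ _ _ _ hij.symm, mul_one, add_zero]

theorem mem_range_scalar_of_commute_single_of_le [LinearOrder n] {M : Matrix n n α}
    (hM : ∀ i j, i ≤ j → Commute (single i j 1) M) : M ∈ Set.range (scalar n) := by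
  cases isEmpty_or_nonempty n
  · exact ⟨0, Subsingleton.elim _ _⟩
  obtain ⟨i⟩ := ‹Nonempty n›
  refine ⟨M i i, Matrix.ext fun j k => ?_⟩
  obtain rfl | hjk := eq_or_ne j k
  · rw [scalar_apply, diagonal_apply_eq]
    rcases le_total i j with h | h
    · exact diag_eq_of_commute_single (hM i j h)
    · exact (diag_eq_of_commute_single (hM j i h)).symm
  · rw [scalar_apply, diagonal_apply_ne _ hjk,
      row_eq_zero_of_commute_single (hM j j le_rfl) hjk.symm]

end Matrix

theorem single_mem_upperTriAlg {R : Type*} [CommRing R] {n : ℕ} {i j : Fin n} (h : i ≤ j)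
    (c : R) : Matrix.single i j c ∈ upperTriAlg R n := by
  intro a b hba
  simp only [Matrix.single, Matrix.of_apply, ite_eq_right_iff, and_imp]
  rintro rfl rfl
  exact absurd h (not_le.mpr hba)

theorem mem_range_scalar_of_forall_isIdempotentElem_commute {R : Type*} [CommRing R] {n : ℕ}
    {M : Matrix (Fin n) (Fin n) R}
    (hM : ∀ e ∈ upperTriAlg R n, IsIdempotentElem e → Commute e M) :
    M ∈ Set.range (Matrix.scalar (Fin n)) := by
  refine Matrix.mem_range_scalar_of_commute_single_of_le fun i j hij => ?_
  have hii := hM _ (single_mem_upperTriAlg (le_refl i) 1) (by simp [IsIdempotentElem])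
  obtain rfl | hne := eq_or_ne i j
  · exact hii
  have hij' := hM _ (add_mem (single_mem_upperTriAlg (le_refl i) 1) (single_mem_upperTriAlg hij 1))
    (Matrix.isIdempotentElem_single_add_single hne)
  simpa using hij'.sub_left hii

theorem Zk_upperTriangular_eq_scalars_general
    {R : Type*} [CommRing R]
    (n : ℕ) (k : ℕ) (hk : 1 ≤ k)
    (W : upperTriAlg R n) :
    (∀ X : upperTriAlg R n, iterComm k W X = 0) ↔
    (∃ r : R, W = r • (1 : upperTriAlg R n)) := by
  constructor
  · intro h
    have hcomm : ∀ e ∈ upperTriAlg R n, IsIdempotentElem e → Commute e (W : Matrix _ _ R) :=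
      fun e he hidem => (commute_of_iterComm_eq_zero hidem (Nat.one_le_iff_ne_zero.mp hk) <| by
        simpa [h] using (map_iterComm (upperTriAlg R n).val k W ⟨e, he⟩).symm).symm
    obtain ⟨r, hr⟩ := mem_range_scalar_of_forall_isIdempotentElem_commute hcomm
    exact ⟨r, Subtype.ext <| by simp [← hr, Matrix.smul_one_eq_diagonal]⟩
  · rintro ⟨r, rfl⟩ X
    rw [← Algebra.algebraMap_eq_smul_one]
    exact iterComm_eq_zero_of_commute (Algebra.commutes r X) (Nat.one_le_iff_ne_zero.mp hk)

/-- over a 2-torsion free commutative ring `R` with identity, for `n ≥ 2` and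
`k ≥ 1`, one has `Z(Tₙ(R))_k = R·1`: a matrix `W ∈ Tₙ(R)` satisfies `[W, X]_k = 0` for all
`X ∈ Tₙ(R)` if and only if `W` is an `R`-scalar multiple of the identity matrix. -/
theorem Zk_upperTriangular_eq_scalars
    {R : Type*} [CommRing R] (htf : ∀ r : R, r + r = 0 → r = 0)
    (n : ℕ) (hn : 2 ≤ n) (k : ℕ) (hk : 1 ≤ k)
    (W : upperTriAlg R n) :
    (∀ X : upperTriAlg R n, iterComm k W X = 0) ↔
    (∃ r : R, W = r • (1 : upperTriAlg R n)) :=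
  Zk_upperTriangular_eq_scalars_general n k hk W
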